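/- arXiv:1909.05711 — 3 statements merged into one kernel-verified Lean document; each statement's English description precedes it below -/
import Mathlib

section
/- Consider a closed walk starting and ending at v_{1,0} in A(m,n) that fully traverses a set S of rows (each an odd number of times) whose maximum row index is m'. Then the cost of the walk is at least 2(m'-1) + (n+1)·|S|; hence if k(m') = 2·floor((B - 2(m'-1))/(2(n+1))), any such walk of cost at most B satisfies |S| ≤ k(m') + 1. -/
/-!
Label a horizontal step of a walk by the row edge it traverses, and a vertical step by the level
it crosses and its direction. A tour fully traversing the rows of `S` uses the `(n+1)|S|` labels
of their row edges. Since it starts and ends in row `1` and visits row `m'`, for each level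
`1 ≤ r < m'` it steps from row `r` up to row `r+1` and later from row `r+1` down to row `r`,
giving `2(m'-1)` more labels. Distinct labels come from distinct steps, so the cost is at least
their number; the bound on `|S|` is then arithmetic.
-/

/-- Adjacency in the aisle-graph `A(m,n)`: vertices `(i,j)` with `1 ≤ i ≤ m`,
`0 ≤ j ≤ n+1`; row edges within a row, column edges in columns `0` and `n+1`. -/
def adjA (m n : ℕ) (p q : ℕ × ℕ) : Prop :=
  (p.1 = q.1 ∧ 1 ≤ p.1 ∧ p.1 ≤ m ∧ (p.2 + 1 = q.2 ∨ q.2 + 1 = p.2) ∧ p.2 ≤ n + 1 ∧ q.2 ≤ n + 1) ∨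
  (p.2 = q.2 ∧ (p.2 = 0 ∨ p.2 = n + 1) ∧ (p.1 + 1 = q.1 ∨ q.1 + 1 = p.1) ∧
    1 ≤ p.1 ∧ p.1 ≤ m ∧ 1 ≤ q.1 ∧ q.1 ≤ m)

/-- A tour: a closed walk starting and ending at `v_{1,0}`. -/
def IsTourA (m n : ℕ) (w : List (ℕ × ℕ)) : Prop :=
  w.Chain' (adjA m n) ∧ w.head? = some (1, 0) ∧ w.getLast? = some (1, 0)

/-- The cost of a walk is its number of edges. -/
def cost (w : List (ℕ × ℕ)) : ℕ := w.length - 1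

/-- Number of times the (undirected) edge `{p,q}` is traversed by the walk `w`. -/
def edgeCount (w : List (ℕ × ℕ)) (p q : ℕ × ℕ) : ℕ :=
  ((w.zip w.tail).count (p, q)) + ((w.zip w.tail).count (q, p))

/-- The walk `w` fully traverses row `i`: it contains all `n+1` edges of row `i`. -/
def FullyTraverses (n : ℕ) (w : List (ℕ × ℕ)) (i : ℕ) : Prop :=
  ∀ j ≤ n, 1 ≤ edgeCount w (i, j) (i, j + 1)

namespace List

variable {α : Type*}

theorem isChain_iff_forall_mem_zip_tail {R : α → α → Prop} :
    ∀ {l : List α}, l.IsChain R ↔ ∀ s ∈ l.zip l.tail, R s.1 s.2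
  | [] => by simp
  | [_] => by simp
  | a :: b :: l => by
    rw [isChain_cons_cons, isChain_iff_forall_mem_zip_tail]
    simp

theorem exists_mem_zip_tail_of_head?_of_not (p : α → Prop) {l : List α} {x y : α}
    (hx : l.head? = some x) (hpx : p x) (hy : y ∈ l) (hpy : ¬ p y) :
    ∃ s ∈ l.zip l.tail, p s.1 ∧ ¬ p s.2 := by
  by_contra! h
  refine hpy ((isChain_iff_forall_mem_zip_tail.2 h).induction p l (fun _ _ h => h) ?_ y hy)
  intro hl
  rw [head?_eq_some_head hl, Option.some.injEq] at hx
  exact hx ▸ hpx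

theorem exists_mem_zip_tail_of_getLast?_of_not (p : α → Prop) {l : List α} {x y : α}
    (hx : l.getLast? = some x) (hpx : p x) (hy : y ∈ l) (hpy : ¬ p y) :
    ∃ s ∈ l.zip l.tail, ¬ p s.1 ∧ p s.2 := by
  by_contra! h
  refine hpy ((isChain_iff_forall_mem_zip_tail.2 h).backwards_induction p l
    (fun _ _ h => not_imp_not.1 h) ?_ y hy)
  intro hl
  rw [getLast?_eq_some_getLast hl, Option.some.injEq] at hx
  exact hx ▸ hpx

end List

theorem Finset.card_le_length_of_forall_mem_map {α β : Type*} [DecidableEq β] (f : α → β)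
    {l : List α} {T : Finset β} (h : ∀ b ∈ T, b ∈ l.map f) : T.card ≤ l.length :=
  calc T.card ≤ (l.map f).toFinset.card := card_le_card fun b hb => List.mem_toFinset.2 (h b hb)
    _ ≤ (l.map f).length := List.toFinset_card_le _
    _ = l.length := List.length_map _

theorem Nat.le_two_mul_div_add_one_of_mul_le {a c C : ℕ} (ha : 0 < a) (h : a * c ≤ C) :
    c ≤ 2 * (C / (2 * a)) + 1 := by
  have : c / 2 ≤ C / (2 * a) := by
    rw [Nat.le_div_iff_mul_le (by positivity)]
    calc c / 2 * (2 * a) = a * (2 * (c / 2)) := by ring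
      _ ≤ a * c := Nat.mul_le_mul_left a (Nat.mul_div_le c 2)
      _ ≤ C := h
  omega

theorem adjA.fst_le_add_one {m n : ℕ} {p q : ℕ × ℕ} (h : adjA m n p q) :
    q.1 ≤ p.1 + 1 ∧ p.1 ≤ q.1 + 1 := by
  rcases h with ⟨h, -⟩ | ⟨-, -, h, -⟩ <;> omega

theorem cost_eq_length_zip_tail (w : List (ℕ × ℕ)) : cost w = (w.zip w.tail).length := by
  simp only [cost, List.length_zip, List.length_tail]
  omega

theorem edgeCount_pos_iff {w : List (ℕ × ℕ)} {p q : ℕ × ℕ} :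
    0 < edgeCount w p q ↔ (p, q) ∈ w.zip w.tail ∨ (q, p) ∈ w.zip w.tail := by
  simp only [edgeCount, ← List.count_pos_iff]
  omega

theorem mem_of_edgeCount_pos {w : List (ℕ × ℕ)} {p q : ℕ × ℕ} (h : 0 < edgeCount w p q) :
    p ∈ w := by
  rcases edgeCount_pos_iff.1 h with h | h
  · exact (List.of_mem_zip h).1
  · exact List.mem_of_mem_tail (List.of_mem_zip h).2

def stepLabel (s : (ℕ × ℕ) × (ℕ × ℕ)) : (ℕ × ℕ) ⊕ (ℕ ⊕ ℕ) :=
  if s.1.1 = s.2.1 then .inl (s.1.1, min s.1.2 s.2.2)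
  else if s.1.1 < s.2.1 then .inr (.inl s.1.1) else .inr (.inr s.2.1)

theorem inl_mem_map_stepLabel_of_edgeCount_pos {w : List (ℕ × ℕ)} {i j : ℕ}
    (h : 0 < edgeCount w (i, j) (i, j + 1)) :
    .inl (i, j) ∈ (w.zip w.tail).map stepLabel := by
  rcases edgeCount_pos_iff.1 h with h | h
  · exact List.mem_map.2 ⟨_, h, by simp [stepLabel]⟩
  · exact List.mem_map.2 ⟨_, h, by simp [stepLabel]⟩

namespace IsTourA

variable {m n : ℕ} {w : List (ℕ × ℕ)}

theorem inr_inl_mem_map_stepLabel (hw : IsTourA m n w) {y : ℕ × ℕ} (hy : y ∈ w) {r : ℕ}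
    (hr : 1 ≤ r) (hry : r < y.1) : .inr (.inl r) ∈ (w.zip w.tail).map stepLabel := by
  obtain ⟨s, hs, hbelow, habove⟩ :=
    List.exists_mem_zip_tail_of_head?_of_not (fun v => v.1 ≤ r) hw.2.1 hr hy (by omega)
  have hrows := (List.isChain_iff_forall_mem_zip_tail.1 hw.1 s hs).fst_le_add_one
  obtain ⟨hfrom, hto⟩ : s.1.1 = r ∧ s.2.1 = r + 1 := by omega
  exact List.mem_map.2 ⟨s, hs, by simp [stepLabel, hfrom, hto]⟩

theorem inr_inr_mem_map_stepLabel (hw : IsTourA m n w) {y : ℕ × ℕ} (hy : y ∈ w) {r : ℕ}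
    (hr : 1 ≤ r) (hry : r < y.1) : .inr (.inr r) ∈ (w.zip w.tail).map stepLabel := by
  obtain ⟨s, hs, habove, hbelow⟩ :=
    List.exists_mem_zip_tail_of_getLast?_of_not (fun v => v.1 ≤ r) hw.2.2 hr hy (by omega)
  have hrows := (List.isChain_iff_forall_mem_zip_tail.1 hw.1 s hs).fst_le_add_one
  obtain ⟨hfrom, hto⟩ : s.1.1 = r + 1 ∧ s.2.1 = r := by omega
  exact List.mem_map.2 ⟨s, hs, by simp [stepLabel, hfrom, hto]⟩

theorem two_mul_add_mul_card_le_cost (hw : IsTourA m n w) {S : Finset ℕ}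
    (hS : ∀ i ∈ S, FullyTraverses n w i) {m' : ℕ} (hm' : m' ∈ S) :
    2 * (m' - 1) + (n + 1) * S.card ≤ cost w := by
  obtain ⟨y, hy, rfl⟩ : ∃ y ∈ w, y.1 = m' :=
    ⟨(m', 0), mem_of_edgeCount_pos (hS m' hm' 0 n.zero_le), rfl⟩
  have hlabels : ∀ ℓ ∈ (S ×ˢ Finset.range (n + 1)).disjSum
      ((Finset.Ico 1 y.1).disjSum (Finset.Ico 1 y.1)), ℓ ∈ (w.zip w.tail).map stepLabel := by
    intro ℓ hℓ
    simp only [Finset.mem_disjSum, Finset.mem_product, Finset.mem_range, Finset.mem_Ico] at hℓ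
    rcases hℓ with ⟨⟨i, j⟩, ⟨hi, hj⟩, rfl⟩ | ⟨_, ⟨r, hr, rfl⟩ | ⟨r, hr, rfl⟩, rfl⟩
    · exact inl_mem_map_stepLabel_of_edgeCount_pos (hS i hi j (by omega))
    · exact hw.inr_inl_mem_map_stepLabel hy hr.1 hr.2
    · exact hw.inr_inr_mem_map_stepLabel hy hr.1 hr.2
  have := Finset.card_le_length_of_forall_mem_map stepLabel hlabels
  simp only [Finset.card_disjSum, Finset.card_product, Finset.card_range, Nat.card_Ico] at this
  rw [cost_eq_length_zip_tail]
  linarith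

end IsTourA

theorem stmt4_general (m n B : ℕ) (w : List (ℕ × ℕ)) (S : Finset ℕ) (m' : ℕ)
    (hw : IsTourA m n w)
    (hodd : ∀ i ∈ S, ∀ j ≤ n, Odd (edgeCount w (i, j) (i, j + 1)))
    (hm'S : m' ∈ S) :
    2 * (m' - 1) + (n + 1) * S.card ≤ cost w ∧
      (cost w ≤ B → S.card ≤ 2 * ((B - 2 * (m' - 1)) / (2 * (n + 1))) + 1) := by
  have hcost := hw.two_mul_add_mul_card_le_cost (fun i hi j hj => (hodd i hi j hj).pos) hm'S
  refine ⟨hcost, fun hB => Nat.le_two_mul_div_add_one_of_mul_le n.succ_pos ?_⟩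
  exact Nat.le_sub_of_add_le' (by linarith)

/-- if a tour fully traverses each row of `S` (each an odd number of
times), with furthest row `m'`, then its cost is at least `2(m'-1) + (n+1)|S|`;
hence cost ≤ B implies `|S| ≤ k(m') + 1` where `k(m') = 2⌊(B-2(m'-1))/(2(n+1))⌋`. -/
theorem stmt4 (m n B : ℕ) (w : List (ℕ × ℕ)) (S : Finset ℕ) (m' : ℕ)
    (hw : IsTourA m n w)
    (hS : ∀ i ∈ S, 1 ≤ i ∧ i ≤ m)
    (hodd : ∀ i ∈ S, ∀ j ≤ n, Odd (edgeCount w (i, j) (i, j + 1)))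
    (hSne : S.Nonempty) (hm'S : m' ∈ S) (hmax : ∀ i ∈ S, i ≤ m') :
    2 * (m' - 1) + (n + 1) * S.card ≤ cost w ∧
      (cost w ≤ B → S.card ≤ 2 * ((B - 2 * (m' - 1)) / (2 * (n + 1))) + 1) :=
  stmt4_general m n B w S m' hw hodd hm'S
end

section
/- Let R_1,...,R_m ≥ 0 be row rewards and for each m' ∈ {1,...,m} let k(m') = 2·floor((B - 2(m'-1))/(2(n+1))) whenever B ≥ 2(m'-1). The value returned by the full-row algorithm, namely max over feasible m' of ( R_{m'} plus the sum of the min(k(m')−1, m'−1) largest values among R_1,...,R_{m'-1} ), equals the maximum of sum_{i∈S} R_i over all nonempty sets S ⊆ {1,...,m} such that, with m' = max S, 2(m'-1) + (n+1)·(|S| rounded up to the nearest even number) ≤ B. -/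
lemma le_of_le_cons_of_notMem {α : Type*} [DecidableEq α] {s M : Multiset α} {a : α}
    (h : s ≤ a ::ₘ M) (ha : a ∉ s) : s ≤ M := by
  rw [Multiset.le_iff_count] at h ⊢
  intro b
  have := h b
  by_cases hb : b = a
  · subst hb
    simp [Multiset.count_eq_zero_of_notMem ha]
  · simpa [Multiset.count_cons, hb] using this

lemma take_sum_le_add (l : List ℕ) (a : ℕ) (h : ∀ x ∈ l, x ≤ a) (t : ℕ) :
    (l.take t).sum ≤ a + (l.take (t - 1)).sum := by
  induction l generalizing t with
  | nil => simp
  | cons b l ih =>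
    cases t with
    | zero => simp
    | succ t =>
      cases t with
      | zero => simpa using h b (by simp)
      | succ t =>
        simp only [List.take_succ_cons, List.sum_cons, Nat.succ_sub_one]
        have := ih (fun x hx => h x (by simp [hx])) (t + 1)
        simp only [Nat.succ_sub_one] at this
        omega

lemma sum_le_take_sorted (L : List ℕ) (hL : L.Pairwise (fun a b => b ≤ a))
    (s : Multiset ℕ) (hs : s ≤ ↑L) (t : ℕ) (hcard : Multiset.card s ≤ t) :
    s.sum ≤ (L.take t).sum := by
  induction L generalizing s t with
  | nil =>
    have : s = 0 := le_antisymm (by simpa using hs) (Multiset.zero_le s)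
    simp [this]
  | cons a L ih =>
    rw [List.pairwise_cons] at hL
    by_cases hmem : a ∈ s
    · have h1 : 1 ≤ Multiset.card s := by
        rw [Nat.one_le_iff_ne_zero]
        intro h0
        rw [Multiset.card_eq_zero] at h0
        rw [h0] at hmem; simp at hmem
      obtain ⟨t', rfl⟩ : ∃ t', t = t' + 1 := ⟨t - 1, by omega⟩
      have hse : s.erase a ≤ ↑L := by
        have := Multiset.erase_le_erase a hs
        simpa using this
      have hc : Multiset.card (s.erase a) ≤ t' := by
        rw [Multiset.card_erase_of_mem hmem, Nat.pred_eq_sub_one]; omega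
      have := ih hL.2 (s.erase a) hse t' hc
      have hsum : s.sum = a + (s.erase a).sum := by
        conv_lhs => rw [← Multiset.cons_erase hmem]
        simp
      rw [hsum, List.take_succ_cons, List.sum_cons]
      omega
    · have hse : s ≤ ↑L := le_of_le_cons_of_notMem (by simpa using hs) hmem
      cases t with
      | zero =>
        rw [Nat.le_zero, Multiset.card_eq_zero] at hcard
        simp [hcard]
      | succ t =>
        have h1 := ih hL.2 s hse (t + 1) hcard
        have h2 := take_sum_le_add L a hL.1 (t + 1)
        simp only [Nat.succ_sub_one] at h2
        rw [List.take_succ_cons, List.sum_cons]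
        omega

lemma exists_subset_of_le_map (f : ℕ → ℕ) (F : Finset ℕ) (s : Multiset ℕ)
    (hs : s ≤ F.val.map f) : ∃ T : Finset ℕ, T ⊆ F ∧ T.val.map f = s := by
  classical
  induction F using Finset.induction generalizing s with
  | empty => exact ⟨∅, by simp, by simpa using (le_antisymm (by simpa using hs) (Multiset.zero_le s)).symm⟩
  | @insert a F ha ih =>
    rw [Finset.insert_val_of_notMem ha, Multiset.map_cons] at hs
    by_cases hmem : f a ∈ s
    · obtain ⟨T, hT, hTs⟩ := ih (s.erase (f a)) (by simpa using Multiset.erase_le_erase (f a) hs)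
      refine ⟨insert a T, Finset.insert_subset_insert a hT, ?_⟩
      have haT : a ∉ T := fun h => ha (hT h)
      rw [Finset.insert_val_of_notMem haT, Multiset.map_cons, hTs, Multiset.cons_erase hmem]
    · obtain ⟨T, hT, hTs⟩ := ih s (le_of_le_cons_of_notMem hs hmem)
      exact ⟨T, hT.trans (Finset.subset_insert a F), hTs⟩

lemma icc_val_eq (R : ℕ → ℕ) (N : ℕ) :
    Multiset.map R (Finset.Icc 1 N).val = ↑((List.range N).map (fun i => R (i + 1))) := by
  induction N with
  | zero => simp
  | succ N ih =>
    have h1 : Finset.Icc 1 (N+1) = insert (N+1) (Finset.Icc 1 N) := by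
      ext x; simp [Finset.mem_Icc]; omega
    have h2 : (N+1) ∉ Finset.Icc 1 N := by simp
    rw [h1, Finset.insert_val_of_notMem h2, Multiset.map_cons, ih, List.range_succ,
      List.map_append]
    exact Multiset.coe_eq_coe.mpr ((List.perm_append_singleton _ _).symm)

open Classical in
/-- the value returned by the full-row algorithm — the max over
feasible furthest rows `m'` of `R_{m'}` plus the `min(k(m')-1, m'-1)` largest
rewards among `R_1, …, R_{m'-1}`, where `k(m') = 2⌊(B-2(m'-1))/(2(n+1))⌋` —
equals the maximum total reward of a feasible full-row solution: a nonempty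
`S ⊆ {1,…,m}` with `m' = max S` satisfying
`2(m'-1) + (n+1)·(|S| rounded up to even) ≤ B`. -/
theorem stmt5 (m n B : ℕ) (R : ℕ → ℕ) (hn : 1 ≤ n) (hB : 2 * (n + 1) ≤ B) :
    (Finset.Icc 1 m).sup (fun m' =>
        if 2 * (m' - 1) + 2 * (n + 1) ≤ B then
          R m' + ((((List.range (m' - 1)).map (fun i => R (i + 1))).mergeSort
              (fun a b => decide (b ≤ a))).take
              (min (2 * ((B - 2 * (m' - 1)) / (2 * (n + 1))) - 1) (m' - 1))).sum
        else 0) =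
      ((Finset.Icc 1 m).powerset.filter (fun S => S.Nonempty ∧
          ∃ m' ∈ S, (∀ i ∈ S, i ≤ m') ∧
            2 * (m' - 1) + (n + 1) * (S.card + S.card % 2) ≤ B)).sup
        (fun S => ∑ i ∈ S, R i) := by
  set Ls : ℕ → List ℕ := fun N =>
    ((List.range N).map (fun i => R (i + 1))).mergeSort (fun a b => decide (b ≤ a)) with hLs
  have hsort : ∀ N, (Ls N).Pairwise (fun a b => b ≤ a) := by
    intro N
    have := List.pairwise_mergeSort (le := fun a b : ℕ => decide (b ≤ a))
      (fun a b c hab hbc => by simp at *; omega)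
      (fun a b => by simpa using Nat.le_total b a)
      ((List.range N).map (fun i => R (i + 1)))
    exact this.imp (fun h => by simpa using h)
  have hperm : ∀ N, (↑(Ls N) : Multiset ℕ) = Multiset.map R (Finset.Icc 1 N).val := by
    intro N
    rw [icc_val_eq]
    exact Multiset.coe_eq_coe.mpr (List.mergeSort_perm _ _)
  have hlen : ∀ N, (Ls N).length = N := by
    intro N
    rw [List.length_mergeSort, List.length_map, List.length_range]
  apply le_antisymm
  · -- LHS ≤ RHS
    apply Finset.sup_le
    intro m' hm'
    split_ifs with hfeas
    swap
    · exact Nat.zero_le _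
    rw [Finset.mem_Icc] at hm'
    set N := m' - 1 with hN
    set q := (B - 2 * N) / (2 * (n + 1)) with hq
    set t := min (2 * q - 1) N with ht
    have hq1 : 1 ≤ q := by
      rw [hq, Nat.le_div_iff_mul_le (by omega)]
      omega
    have hdiv : q * (2 * (n + 1)) ≤ B - 2 * N := Nat.div_mul_le_self _ _
    -- the take as a submultiset
    have hsub : (↑((Ls N).take t) : Multiset ℕ) ≤ Multiset.map R (Finset.Icc 1 N).val := by
      rw [← hperm]
      exact ((List.take_sublist t (Ls N)).subperm : _)
    obtain ⟨T, hTsub, hTmap⟩ := exists_subset_of_le_map R (Finset.Icc 1 N) _ hsub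
    have hTcard : T.card = t := by
      have h := congrArg Multiset.card hTmap
      rw [Multiset.card_map, Multiset.coe_card, List.length_take, hlen N] at h
      rw [Finset.card_def, h]
      omega
    have hm'T : m' ∉ T := by
      intro h
      have := hTsub h
      rw [Finset.mem_Icc] at this
      omega
    have hTsum : ∑ i ∈ T, R i = ((Ls N).take t).sum := by
      have : ∑ i ∈ T, R i = (Multiset.map R T.val).sum := rfl
      rw [this, hTmap, Multiset.sum_coe]
    set S := insert m' T with hS
    have hScard : S.card = t + 1 := by
      rw [hS, Finset.card_insert_of_notMem hm'T, hTcard]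
    have hSmem : S ∈ (Finset.Icc 1 m).powerset.filter (fun S => S.Nonempty ∧
        ∃ m'' ∈ S, (∀ i ∈ S, i ≤ m'') ∧
          2 * (m'' - 1) + (n + 1) * (S.card + S.card % 2) ≤ B) := by
      rw [Finset.mem_filter, Finset.mem_powerset]
      refine ⟨?_, ⟨m', by simp [hS]⟩, m', by simp [hS], ?_, ?_⟩
      · intro x hx
        rw [hS, Finset.mem_insert] at hx
        rcases hx with rfl | hx
        · rw [Finset.mem_Icc]; omega
        · have := hTsub hx
          rw [Finset.mem_Icc] at this ⊢
          omega
      · intro i hi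
        rw [hS, Finset.mem_insert] at hi
        rcases hi with rfl | hi
        · exact le_refl _
        · have := hTsub hi
          rw [Finset.mem_Icc] at this
          omega
      · rw [hScard]
        have hc2q : t + 1 + (t + 1) % 2 ≤ 2 * q := by omega
        have hP : (n + 1) * (t + 1 + (t + 1) % 2) ≤ B - 2 * N := by
          calc (n + 1) * (t + 1 + (t + 1) % 2) ≤ (n + 1) * (2 * q) :=
                Nat.mul_le_mul_left _ hc2q
            _ = q * (2 * (n + 1)) := by ring
            _ ≤ B - 2 * N := hdiv
        omega
    calc R m' + ((Ls N).take t).sum = ∑ i ∈ S, R i := by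
          rw [hS, Finset.sum_insert hm'T, hTsum]
      _ ≤ _ := Finset.le_sup (f := fun S => ∑ i ∈ S, R i) hSmem
  · -- RHS ≤ LHS
    apply Finset.sup_le
    intro S hS
    rw [Finset.mem_filter, Finset.mem_powerset] at hS
    obtain ⟨hSsub, hne, m', hm'S, hmax, hbud⟩ := hS
    have hm'Icc : m' ∈ Finset.Icc 1 m := hSsub hm'S
    have hm'b : 1 ≤ m' ∧ m' ≤ m := Finset.mem_Icc.mp hm'Icc
    set N := m' - 1 with hN
    set c := S.card with hc
    have hc1 : 1 ≤ c := Finset.card_pos.mpr hne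
    have hP : (n + 1) * (c + c % 2) ≤ B - 2 * N := by omega
    have hfeas : 2 * (N) + 2 * (n + 1) ≤ B := by
      have : (n + 1) * 2 ≤ (n + 1) * (c + c % 2) := Nat.mul_le_mul_left _ (by omega)
      omega
    set q := (B - 2 * N) / (2 * (n + 1)) with hq
    have hcq : c ≤ 2 * q := by
      have he : (c + c % 2) / 2 ≤ q := by
        rw [hq, Nat.le_div_iff_mul_le (by omega)]
        calc (c + c % 2) / 2 * (2 * (n + 1)) = (n + 1) * (2 * ((c + c % 2) / 2)) := by ring
          _ = (n + 1) * (c + c % 2) := by congr 1; omega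
          _ ≤ B - 2 * N := hP
      omega
    have hcm : c ≤ m' := by
      have hsub2 : S ⊆ Finset.Icc 1 m' := by
        intro i hi
        have h1 := Finset.mem_Icc.mp (hSsub hi)
        rw [Finset.mem_Icc]
        exact ⟨h1.1, hmax i hi⟩
      calc c ≤ (Finset.Icc 1 m').card := Finset.card_le_card hsub2
        _ = m' := by rw [Nat.card_Icc]; omega
    set t := min (2 * q - 1) N with ht
    have herase : S.erase m' ⊆ Finset.Icc 1 N := by
      intro i hi
      rw [Finset.mem_erase] at hi
      have h1 := Finset.mem_Icc.mp (hSsub hi.2)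
      have h2 := hmax i hi.2
      rw [Finset.mem_Icc]
      omega
    have hsmle : ((S.erase m').val.map R : Multiset ℕ) ≤ ↑(Ls N) := by
      rw [hperm]
      exact Multiset.map_le_map (Finset.val_le_iff.mpr herase)
    have hscard : Multiset.card ((S.erase m').val.map R) ≤ t := by
      rw [Multiset.card_map]
      have h : (S.erase m').card = c - 1 := by
        rw [Finset.card_erase_of_mem hm'S, ← hc]
      rw [← Finset.card_def, h]
      omega
    have hkey := sum_le_take_sorted (Ls N) (hsort N) _ hsmle t hscard
    have hsum : ∑ i ∈ S, R i = R m' + ∑ i ∈ S.erase m', R i := by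
      rw [← Finset.sum_erase_add S R hm'S]; omega
    have hval : ∑ i ∈ S, R i ≤ R m' + ((Ls N).take t).sum := by
      rw [hsum]
      have : ∑ i ∈ S.erase m', R i = (Multiset.map R (S.erase m').val).sum := rfl
      omega
    calc ∑ i ∈ S, R i ≤ R m' + ((Ls N).take t).sum := hval
      _ ≤ _ := by
          refine le_trans ?_ (Finset.le_sup hm'Icc)
          rw [if_pos (by omega : 2 * (m' - 1) + 2 * (n + 1) ≤ B)]
end

section
/- In A_C(m,n), every closed walk from v_{1,0} has even cost, and for any closed walk collecting rewards (each vertex's reward counted once), there is a closed walk of no greater cost and equal or greater reward that visits each row at most as a single back-and-forth excursion: it visits rows in increasing order of index and, in each visited row i, goes from v_{i,0} to some v_{i,j_i} and back. -/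
/-- Adjacency in the single-column aisle-graph `A_C(m,n)`: vertices `(i,j)` with
`1 ≤ i ≤ m`, `0 ≤ j ≤ n`; row edges within a row, column edges only in column `0`. -/
def adjC (m n : ℕ) (p q : ℕ × ℕ) : Prop :=
  (p.1 = q.1 ∧ 1 ≤ p.1 ∧ p.1 ≤ m ∧ (p.2 + 1 = q.2 ∨ q.2 + 1 = p.2) ∧ p.2 ≤ n ∧ q.2 ≤ n) ∨
  (p.2 = 0 ∧ q.2 = 0 ∧ (p.1 + 1 = q.1 ∨ q.1 + 1 = p.1) ∧
    1 ≤ p.1 ∧ p.1 ≤ m ∧ 1 ≤ q.1 ∧ q.1 ≤ m)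

/-- A tour: a closed walk starting and ending at `v_{1,0}`. -/
def IsTourC (m n : ℕ) (w : List (ℕ × ℕ)) : Prop :=
  w.Chain' (adjC m n) ∧ w.head? = some (1, 0) ∧ w.getLast? = some (1, 0)

/-- The back-and-forth excursion in row `i` down to depth `d`:
`(i,0), (i,1), …, (i,d), (i,d-1), …, (i,0)`. -/
def excursion (i d : ℕ) : List (ℕ × ℕ) :=
  ((List.range (d + 1)).map (fun j => (i, j))) ++
    (((List.range (d + 1)).map (fun j => (i, j))).reverse.tail)

/-- The canonical walk that visits rows `1, …, k` in increasing order, performing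
in row `i` a back-and-forth excursion to depth `d i`, then returns to `v_{1,0}`
along column `0`. -/
def excWalk (k : ℕ) (d : ℕ → ℕ) : List (ℕ × ℕ) :=
  ((List.range k).flatMap (fun t => excursion (t + 1) (d (t + 1)))) ++
    ((List.range (k - 1)).reverse.map (fun t => (t + 1, 0)))

/-!
The edges of `A_C(m,n)` form a tree rooted at `v_{1,0}`, and a walk traverses a tree edge exactly
when it crosses the cut separating the subtree below that edge from the root. A closed walk
crosses every cut an even number of times, hence at least twice whenever it visits the far side.
Let `k` be the last row the walk visits and `d i` the deepest column it reaches in row `i`: the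
excursion walk for `k, d` traverses exactly the edges below which the walk visits some vertex,
each twice, and it visits every vertex the walk visits. Evenness of the cost is the same parity count for the cut `i + j` even/odd,
which every edge crosses.
-/
namespace List

variable {α ι : Type*}

def crossings (f : α → Bool) : List α → ℕ
  | a :: b :: l => (if f a = f b then 0 else 1) + crossings f (b :: l)
  | _ => 0

@[simp] lemma crossings_nil (f : α → Bool) : crossings f [] = 0 := rfl

@[simp] lemma crossings_singleton (f : α → Bool) (a : α) : crossings f [a] = 0 := rfl

@[simp] lemma crossings_cons_cons (f : α → Bool) (a b : α) (l : List α) :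
    crossings f (a :: b :: l) = (if f a = f b then 0 else 1) + crossings f (b :: l) := rfl

lemma even_crossings_cons_iff (f : α → Bool) (a : α) (l : List α) :
    Even (crossings f (a :: l)) ↔ f a = f ((a :: l).getLast (cons_ne_nil a l)) := by
  induction l generalizing a with
  | nil => simp
  | cons b l ih =>
    rw [crossings_cons_cons, getLast_cons_cons, Nat.even_add, ih b]
    cases f a <;> cases f b <;> simp

lemma eq_of_crossings_cons_eq_zero {f : α → Bool} {a : α} {l : List α}
    (h : crossings f (a :: l) = 0) : ∀ x ∈ a :: l, f x = f a := by
  induction l generalizing a with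
  | nil => simp
  | cons b l ih =>
    rw [crossings_cons_cons, Nat.add_eq_zero_iff] at h
    have hab : f a = f b := by by_contra hne; simp [hne] at h
    intro x hx
    rcases mem_cons.1 hx with rfl | hx
    · rfl
    · rw [ih h.2 x hx, hab]

lemma even_crossings {f : α → Bool} {w : List α} {a : α} (hhead : w.head? = some a)
    (hlast : w.getLast? = some a) : Even (crossings f w) := by
  obtain ⟨l, rfl⟩ := head?_eq_some_iff.1 hhead
  rw [getLast?_eq_some_getLast (cons_ne_nil a l), Option.some_inj] at hlast
  rw [even_crossings_cons_iff, hlast]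

lemma two_le_crossings {f : α → Bool} {w : List α} {a x : α} (hhead : w.head? = some a)
    (hlast : w.getLast? = some a) (hx : x ∈ w) (hfx : f x ≠ f a) : 2 ≤ crossings f w := by
  obtain ⟨l, rfl⟩ := head?_eq_some_iff.1 hhead
  have hne : crossings f (a :: l) ≠ 0 := fun h => hfx (eq_of_crossings_cons_eq_zero h x hx)
  obtain ⟨t, ht⟩ := even_crossings (f := f) hhead hlast
  omega

lemma crossings_eq_length_sub_one {R : α → α → Prop} {f : α → Bool}
    (hf : ∀ a b, R a b → f a ≠ f b) {w : List α} (hw : w.IsChain R) :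
    crossings f w = w.length - 1 := by
  induction w with
  | nil => rfl
  | cons a l ih =>
    cases l with
    | nil => rfl
    | cons b l =>
      rw [isChain_cons_cons] at hw
      simp [hf a b hw.1, ih hw.2]
      omega

lemma sum_crossings_le_length_sub_one {R : α → α → Prop} {f : ι → α → Bool} (C : Finset ι)
    (hf : ∀ a b, R a b → ∀ c ∈ C, ∀ c' ∈ C, f c a ≠ f c b → f c' a ≠ f c' b → c = c')
    {w : List α} (hw : w.IsChain R) :
    ∑ c ∈ C, crossings (f c) w ≤ w.length - 1 := by
  induction w with
  | nil => simp
  | cons a l ih =>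
    cases l with
    | nil => simp
    | cons b l =>
      rw [isChain_cons_cons] at hw
      have hone : (C.filter fun c => f c a ≠ f c b).card ≤ 1 :=
        Finset.card_le_one.2 fun c hc c' hc' =>
          hf a b hw.1 c (Finset.mem_filter.1 hc).1 c' (Finset.mem_filter.1 hc').1
            (Finset.mem_filter.1 hc).2 (Finset.mem_filter.1 hc').2
      rw [Finset.card_filter] at hone
      simp only [ne_eq, ite_not] at hone
      simp only [crossings_cons_cons, Finset.sum_add_distrib, length_cons]
      have := ih hw.2
      simp only [length_cons] at this
      omega

end List

open List

open List

lemma excursion_eq_map (i d : ℕ) :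
    excursion i d = (range (d + 1) ++ (range d).reverse).map (fun j => (i, j)) := by
  rw [excursion, map_append, ← map_reverse, ← map_tail, range_succ (n := d)]
  simp

lemma head?_excursion (i d : ℕ) : (excursion i d).head? = some (i, 0) := by
  simp [excursion_eq_map, head?_range]

lemma getLast?_excursion (i d : ℕ) : (excursion i d).getLast? = some (i, 0) := by
  rcases d with _ | d
  · simp [excursion_eq_map]
  · simp [excursion_eq_map, getLast?_append, head?_range]

lemma length_excursion (i d : ℕ) : (excursion i d).length = 2 * d + 1 := by
  simp [excursion_eq_map]
  omega

lemma mk_mem_excursion {i d j : ℕ} (hj : j ≤ d) : (i, j) ∈ excursion i d := by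
  simp [excursion_eq_map]
  omega

lemma isChain_range_append_reverse_range (d : ℕ) :
    (range (d + 1) ++ (range d).reverse).IsChain (fun a b => a + 1 = b ∨ b + 1 = a) := by
  refine isChain_append.2 ⟨(isChain_range _ _).2 fun _ _ => Or.inl rfl,
    isChain_reverse.2 ((isChain_range _ _).2 fun _ _ => Or.inr rfl), ?_⟩
  rcases d with _ | d <;> simp [getLast?_range]

lemma isChain_excursion {m n i d : ℕ} (hi : 1 ≤ i) (him : i ≤ m) (hd : d ≤ n) :
    (excursion i d).IsChain (adjC m n) := by
  rw [excursion_eq_map, isChain_map]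
  refine (isChain_range_append_reverse_range d).imp_of_mem_imp fun a b ha hb hab => ?_
  simp only [mem_append, mem_range, mem_reverse] at ha hb
  exact Or.inl ⟨rfl, hi, him, hab, by omega, by omega⟩

def rowExcursions (k : ℕ) (d : ℕ → ℕ) : List (ℕ × ℕ) :=
  (range k).flatMap fun t => excursion (t + 1) (d (t + 1))

def columnReturn (k : ℕ) : List (ℕ × ℕ) :=
  (range (k - 1)).reverse.map fun t => (t + 1, 0)

lemma excWalk_eq_append (k : ℕ) (d : ℕ → ℕ) :
    excWalk k d = rowExcursions k d ++ columnReturn k := rfl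

lemma head?_rowExcursions (k : ℕ) (d : ℕ → ℕ) :
    (rowExcursions (k + 1) d).head? = some (1, 0) := by
  simp [rowExcursions, head?_flatMap, range_succ_eq_map, head?_excursion]

lemma getLast?_rowExcursions (k : ℕ) (d : ℕ → ℕ) :
    (rowExcursions (k + 1) d).getLast? = some (k + 1, 0) := by
  simp [rowExcursions, getLast?_flatMap, range_succ, getLast?_excursion]

lemma isChain_rowExcursions {m n k : ℕ} (d : ℕ → ℕ) (hkm : k ≤ m) (hd : ∀ i, d i ≤ n) :
    (rowExcursions k d).IsChain (adjC m n) := by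
  rw [rowExcursions, flatMap_def,
    isChain_flatten (by simp [← length_eq_zero_iff, length_excursion])]
  refine ⟨?_, ?_⟩
  · simp only [mem_map, mem_range]
    rintro _ ⟨t, ht, rfl⟩
    exact isChain_excursion (by omega) (by omega) (hd _)
  · rw [isChain_map, isChain_range]
    intro t ht
    simp only [getLast?_excursion, head?_excursion, Option.mem_def, Option.some.injEq]
    rintro _ rfl _ rfl
    exact Or.inr ⟨rfl, rfl, Or.inl rfl, by omega, by omega, by omega, by omega⟩

lemma isChain_columnReturn {m n k : ℕ} (hkm : k ≤ m) : (columnReturn k).IsChain (adjC m n) := by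
  rw [columnReturn, isChain_map, isChain_reverse, isChain_range]
  intro t ht
  exact Or.inr ⟨rfl, rfl, Or.inr rfl, by omega, by omega, by omega, by omega⟩

lemma isTourC_excWalk {m n k : ℕ} (d : ℕ → ℕ) (hk : 1 ≤ k) (hkm : k ≤ m) (hd : ∀ i, d i ≤ n) :
    IsTourC m n (excWalk k d) := by
  obtain ⟨k, rfl⟩ : ∃ k', k = k' + 1 := ⟨k - 1, by omega⟩
  have hjoin : ∀ x ∈ (rowExcursions (k + 1) d).getLast?, ∀ y ∈ (columnReturn (k + 1)).head?,
      adjC m n x y := by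
    rw [getLast?_rowExcursions]
    rcases k with _ | k
    · simp [columnReturn]
    · simp [columnReturn, getLast?_range]
      exact Or.inr ⟨rfl, rfl, Or.inr rfl, by omega, by omega, by omega, by omega⟩
  refine ⟨?_, ?_, ?_⟩
  · rw [excWalk_eq_append]
    exact isChain_append.2 ⟨isChain_rowExcursions d hkm hd, isChain_columnReturn hkm, hjoin⟩
  · rw [excWalk_eq_append, head?_append, head?_rowExcursions]; rfl
  · rcases k with _ | k
    · simp [excWalk_eq_append, columnReturn, getLast?_rowExcursions]
    · simp [excWalk_eq_append, columnReturn, getLast?_append, range_succ_eq_map]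

lemma length_excWalk (k : ℕ) (d : ℕ → ℕ) :
    (excWalk k d).length = ∑ t ∈ Finset.range k, (2 * d (t + 1) + 1) + (k - 1) := by
  rw [← toFinset_range, sum_toFinset _ nodup_range]
  simp [excWalk_eq_append, rowExcursions, columnReturn, length_flatMap, length_excursion]

lemma mk_mem_excWalk {k i j : ℕ} (d : ℕ → ℕ) (hi : 1 ≤ i) (hik : i ≤ k) (hj : j ≤ d i) :
    (i, j) ∈ excWalk k d := by
  refine mem_append_left _ (mem_flatMap.2 ⟨i - 1, mem_range.2 (by omega), ?_⟩)
  rw [Nat.sub_add_cancel hi]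
  exact mk_mem_excursion hj

/-- The tree edges of `A_C(m,n)` are indexed by their endpoint `c` away from the root `(1, 0)`;
`inSubtree c` is the side of that edge not containing the root: the rows `≥ c.1` if `c` lies
in column `0`, and the part of row `c.1` from column `c.2` on otherwise. -/
def inSubtree (c v : ℕ × ℕ) : Bool :=
  if c.2 = 0 then decide (c.1 ≤ v.1) else decide (v.1 = c.1 ∧ c.2 ≤ v.2)

lemma eq_of_adjC_inSubtree_ne {m n : ℕ} {p q c c' : ℕ × ℕ} (h : adjC m n p q)
    (hc : inSubtree c p ≠ inSubtree c q) (hc' : inSubtree c' p ≠ inSubtree c' q) : c = c' := by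
  obtain ⟨c1, c2⟩ := c
  obtain ⟨c1', c2'⟩ := c'
  unfold adjC at h
  unfold inSubtree at hc hc'
  simp only [Prod.mk.injEq]
  split_ifs at hc hc' <;> simp only [ne_eq, decide_eq_decide] at hc hc' <;> omega

lemma decide_even_ne_of_adjC {m n : ℕ} {p q : ℕ × ℕ} (h : adjC m n p q) :
    decide (Even (p.1 + p.2)) ≠ decide (Even (q.1 + q.2)) := by
  unfold adjC at h
  simp only [ne_eq, decide_eq_decide, Nat.even_iff]
  omega

namespace IsTourC

variable {m n : ℕ} {w : List (ℕ × ℕ)}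

lemma head_mem (hw : IsTourC m n w) : (1, 0) ∈ w := mem_of_mem_head? hw.2.1

lemma mem_bounds (hw : IsTourC m n w) (hm : 1 ≤ m) :
    ∀ v ∈ w, 1 ≤ v.1 ∧ v.1 ≤ m ∧ v.2 ≤ n := by
  refine IsChain.induction _ w hw.1 (fun p q h _ => ?_) fun hne => ?_
  · unfold adjC at h
    omega
  · rw [(head_eq_iff_head?_eq_some hne).2 hw.2.1]
    exact ⟨le_rfl, hm, Nat.zero_le n⟩

lemma even_cost (hw : IsTourC m n w) : Even (cost w) := by
  rw [cost, ← crossings_eq_length_sub_one (R := adjC m n) (fun _ _ => decide_even_ne_of_adjC) hw.1]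
  exact even_crossings hw.2.1 hw.2.2

lemma two_mul_card_le_cost (hw : IsTourC m n w) (S : Finset (ℕ × ℕ))
    (hS : ∀ c ∈ S, inSubtree c (1, 0) = false ∧ ∃ x ∈ w, inSubtree c x = true) :
    2 * S.card ≤ cost w :=
  calc 2 * S.card = S.card • 2 := by rw [smul_eq_mul, mul_comm]
    _ ≤ ∑ c ∈ S, crossings (inSubtree c) w := Finset.card_nsmul_le_sum _ _ _ fun c hc => by
        obtain ⟨hroot, x, hx, hxc⟩ := hS c hc
        exact two_le_crossings hw.2.1 hw.2.2 hx (by rw [hroot, hxc]; decide)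
    _ ≤ cost w := sum_crossings_le_length_sub_one S
        (fun _ _ h _ _ _ _ => eq_of_adjC_inSubtree_ne h) hw.1

end IsTourC

def maxRow (w : List (ℕ × ℕ)) : ℕ := w.toFinset.sup Prod.fst

def maxDepth (w : List (ℕ × ℕ)) (i : ℕ) : ℕ := (w.toFinset.filter (·.1 = i)).sup Prod.snd

lemma le_maxRow {w : List (ℕ × ℕ)} {v : ℕ × ℕ} (hv : v ∈ w) : v.1 ≤ maxRow w :=
  Finset.le_sup (f := Prod.fst) (mem_toFinset.2 hv)

lemma le_maxDepth {w : List (ℕ × ℕ)} {v : ℕ × ℕ} (hv : v ∈ w) : v.2 ≤ maxDepth w v.1 :=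
  Finset.le_sup (f := Prod.snd) (Finset.mem_filter.2 ⟨mem_toFinset.2 hv, rfl⟩)

lemma exists_mem_fst_eq_maxRow {w : List (ℕ × ℕ)} (hw : w ≠ []) : ∃ v ∈ w, v.1 = maxRow w := by
  obtain ⟨v, hv, h⟩ := Finset.exists_mem_eq_sup _ (toFinset_nonempty_iff w |>.2 hw) Prod.fst
  exact ⟨v, mem_toFinset.1 hv, h.symm⟩

lemma exists_mem_eq_maxDepth {w : List (ℕ × ℕ)} {i : ℕ} (hi : 0 < maxDepth w i) :
    ∃ v ∈ w, v.1 = i ∧ v.2 = maxDepth w i := by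
  have hne : (w.toFinset.filter (·.1 = i)).Nonempty := by
    by_contra h
    rw [Finset.not_nonempty_iff_eq_empty] at h
    simp [maxDepth, h] at hi
  obtain ⟨v, hv, h⟩ := Finset.exists_mem_eq_sup _ hne Prod.snd
  rw [Finset.mem_filter, mem_toFinset] at hv
  exact ⟨v, hv.1, hv.2, h.symm⟩

/-- The vertices of `excWalk k d` other than the root, i.e. the tree edges it traverses. -/
def excWalkCuts (k : ℕ) (d : ℕ → ℕ) : Finset (ℕ × ℕ) :=
  (((Finset.range k).sigma fun t => Finset.range (d (t + 1) + 1)).image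
    fun x => (x.1 + 1, x.2)).erase (1, 0)

lemma mem_excWalkCuts {k : ℕ} {d : ℕ → ℕ} {c : ℕ × ℕ} :
    c ∈ excWalkCuts k d ↔ c ≠ (1, 0) ∧ 1 ≤ c.1 ∧ c.1 ≤ k ∧ c.2 ≤ d c.1 := by
  obtain ⟨i, j⟩ := c
  simp only [excWalkCuts, Finset.mem_erase, Finset.mem_image, Finset.mem_sigma, Finset.mem_range,
    Sigma.exists, Prod.mk.injEq]
  constructor
  · rintro ⟨hne, t, j, ⟨ht, hj⟩, rfl, rfl⟩
    exact ⟨hne, by omega, by omega, by omega⟩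
  · rintro ⟨hne, hi, hik, hj⟩
    exact ⟨hne, i - 1, j, ⟨by omega, by rw [Nat.sub_add_cancel hi]; omega⟩, by omega, rfl⟩

lemma two_mul_card_excWalkCuts {k : ℕ} (hk : 1 ≤ k) (d : ℕ → ℕ) :
    2 * (excWalkCuts k d).card = cost (excWalk k d) := by
  have hinj : Function.Injective fun x : (_ : ℕ) × ℕ => (x.1 + 1, x.2) := by
    rintro ⟨t, j⟩ ⟨t', j'⟩ h
    simp only [Prod.mk.injEq, add_left_inj] at h
    obtain ⟨rfl, rfl⟩ := h
    rfl
  have hroot : (1, 0) ∈ ((Finset.range k).sigma fun t => Finset.range (d (t + 1) + 1)).image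
      fun x => (x.1 + 1, x.2) :=
    Finset.mem_image.2 ⟨⟨0, 0⟩, Finset.mem_sigma.2 ⟨Finset.mem_range.2 hk, by simp⟩, rfl⟩
  rw [excWalkCuts, Finset.card_erase_of_mem hroot, Finset.card_image_of_injective _ hinj,
    Finset.card_sigma, cost, length_excWalk]
  simp only [Finset.card_range, Finset.sum_add_distrib, Finset.sum_const, smul_eq_mul, mul_one,
    ← Finset.mul_sum]
  omega

lemma inSubtree_root_of_mem_excWalkCuts {k : ℕ} {d : ℕ → ℕ} {c : ℕ × ℕ}
    (hc : c ∈ excWalkCuts k d) : inSubtree c (1, 0) = false := by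
  obtain ⟨hne, hc1, -, -⟩ := mem_excWalkCuts.1 hc
  obtain ⟨i, j⟩ := c
  simp only [ne_eq, Prod.mk.injEq] at hne hc1
  unfold inSubtree
  split_ifs <;> simp only [decide_eq_false_iff_not] <;> omega

lemma exists_mem_inSubtree_of_mem_excWalkCuts {w : List (ℕ × ℕ)} (hw : w ≠ []) {c : ℕ × ℕ}
    (hc : c ∈ excWalkCuts (maxRow w) (maxDepth w)) : ∃ x ∈ w, inSubtree c x = true := by
  obtain ⟨i, j⟩ := c
  obtain ⟨-, hi, hik, hj⟩ := mem_excWalkCuts.1 hc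
  dsimp only at hi hik hj
  rcases Nat.eq_zero_or_pos j with rfl | hj0
  · obtain ⟨v, hv, hvk⟩ := exists_mem_fst_eq_maxRow hw
    exact ⟨v, hv, by simp only [inSubtree, if_true, decide_eq_true_eq]; omega⟩
  · obtain ⟨v, hv, hvi, hvd⟩ := exists_mem_eq_maxDepth (w := w) (i := i) (by omega)
    refine ⟨v, hv, ?_⟩
    simp only [inSubtree, hj0.ne', if_false, decide_eq_true_eq]
    omega

lemma IsTourC.cost_excWalk_le {m n : ℕ} {w : List (ℕ × ℕ)} (hw : IsTourC m n w) :
    cost (excWalk (maxRow w) (maxDepth w)) ≤ cost w := by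
  rw [← two_mul_card_excWalkCuts (le_maxRow hw.head_mem)]
  exact hw.two_mul_card_le_cost _ fun c hc => ⟨inSubtree_root_of_mem_excWalkCuts hc,
    exists_mem_inSubtree_of_mem_excWalkCuts (ne_nil_of_mem hw.head_mem) hc⟩

theorem stmt9_general (m n : ℕ) (hm : 1 ≤ m) (r : ℕ × ℕ → NNReal)
    (w : List (ℕ × ℕ)) (hw : IsTourC m n w) :
    Even (cost w) ∧
    ∃ (k : ℕ) (d : ℕ → ℕ), 1 ≤ k ∧ k ≤ m ∧ (∀ i, d i ≤ n) ∧
      IsTourC m n (excWalk k d) ∧ cost (excWalk k d) ≤ cost w ∧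
      ∑ v ∈ w.toFinset, r v ≤ ∑ v ∈ (excWalk k d).toFinset, r v := by
  have hbounds := hw.mem_bounds hm
  have hk : 1 ≤ maxRow w := le_maxRow hw.head_mem
  have hkm : maxRow w ≤ m := Finset.sup_le fun v hv => (hbounds v (mem_toFinset.1 hv)).2.1
  have hdn : ∀ i, maxDepth w i ≤ n := fun i =>
    Finset.sup_le fun v hv => (hbounds v (mem_toFinset.1 (Finset.mem_filter.1 hv).1)).2.2
  refine ⟨hw.even_cost, maxRow w, maxDepth w, hk, hkm, hdn, isTourC_excWalk _ hk hkm hdn,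
    hw.cost_excWalk_le, Finset.sum_le_sum_of_subset fun v hv => ?_⟩
  rw [mem_toFinset] at hv ⊢
  exact mk_mem_excWalk _ (hbounds v hv).1 (le_maxRow hv) (le_maxDepth hv)

/-- every closed walk from `v_{1,0}` in `A_C(m,n)` has even cost, and
for any such walk there is an excursion-form walk (rows visited in increasing
order, each as a single back-and-forth excursion from `v_{i,0}` to some `v_{i,j_i}`)
of no greater cost and equal or greater reward (rewards counted once per vertex). -/
theorem stmt9 (m n : ℕ) (hm : 1 ≤ m) (r : ℕ × ℕ → NNReal) (hr0 : ∀ i, r (i, 0) = 0)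
    (w : List (ℕ × ℕ)) (hw : IsTourC m n w) :
    Even (cost w) ∧
    ∃ (k : ℕ) (d : ℕ → ℕ), 1 ≤ k ∧ k ≤ m ∧ (∀ i, d i ≤ n) ∧
      IsTourC m n (excWalk k d) ∧ cost (excWalk k d) ≤ cost w ∧
      ∑ v ∈ w.toFinset, r v ≤ ∑ v ∈ (excWalk k d).toFinset, r v :=
  stmt9_general m n hm r w hw
end
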